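/- arXiv:1501.04958 — 3 statements merged into one kernel-verified Lean document; each statement's English description precedes it below -/
import Mathlib

section
/- Let Φ : ℝ → ℂ be twice continuously differentiable with Φ, Φ′, Φ″ bounded, and let Φ₀(t) = (1/(2π)) ∫_{−1}^{1} Φ(λ)(1−|λ|) e^{iλt} dλ. Then Φ₀ ∈ L¹(ℝ) and ‖Φ₀‖_{L¹} ≤ (2/π)·‖Φ‖_∞^{1/2}·(4‖Φ‖_∞ + 4‖Φ′‖_∞ + ‖Φ″‖_∞)^{1/2}. -/
open MeasureTheory intervalIntegral Set

lemma my_ibp (c : ℂ) (hc : c ≠ 0) (a b : ℝ) (u u' : ℝ → ℂ)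
    (hu : ∀ x : ℝ, HasDerivAt u (u' x) x) (hu' : Continuous u') :
    ∫ x in a..b, u x * Complex.exp (c * x) =
      (u b * Complex.exp (c * b) - u a * Complex.exp (c * a)) / c
        - (1 / c) * ∫ x in a..b, u' x * Complex.exp (c * x) := by
  have hv : ∀ x : ℝ, HasDerivAt (fun y : ℝ => Complex.exp (c * y) / c)
      (Complex.exp (c * x)) x := by
    intro x
    have h1 : HasDerivAt (fun y : ℝ => c * (y : ℂ)) c x := by
      simpa using ((hasDerivAt_id x).ofReal_comp (z := x)).const_mul c
    have h2 := (h1.cexp).div_const c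
    simpa [mul_div_assoc, mul_div_cancel_right₀ _ hc] using h2
  have hint1 : IntervalIntegrable u' volume a b := hu'.intervalIntegrable a b
  have hint2 : IntervalIntegrable (fun x : ℝ => Complex.exp (c * x)) volume a b := by
    apply Continuous.intervalIntegrable
    exact Complex.continuous_exp.comp (continuous_const.mul Complex.continuous_ofReal)
  have H := integral_mul_deriv_eq_deriv_mul (fun x _ => hu x) (fun x _ => hv x) hint1 hint2
  rw [H]
  have : ∀ x : ℝ, u' x * (Complex.exp (c * x) / c) = (1 / c) * (u' x * Complex.exp (c * x)) :=
    fun x => by ring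
  simp only [this]
  rw [intervalIntegral.integral_const_mul]
  ring

lemma my_linint (p q a b : ℝ) :
    ∫ x in a..b, (p + q * x) = p * (b - a) + q * ((b ^ 2 - a ^ 2) / 2) := by
  have h2 : IntervalIntegrable (fun x : ℝ => q * x) volume a b :=
    (continuous_const.mul continuous_id').intervalIntegrable a b
  rw [intervalIntegral.integral_add (_root_.intervalIntegrable_const (c := p)) h2,
    intervalIntegral.integral_const, intervalIntegral.integral_const_mul, integral_id]
  simp [smul_eq_mul]
  ring

lemma my_piece (Φ : ℝ → ℂ) (hΦ : ContDiff ℝ 2 Φ) (c : ℂ) (hc : c ≠ 0) (s : ℂ) (a b : ℝ) :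
    ∫ x in a..b, Φ x * (1 + s * x) * Complex.exp (c * x) =
      (Φ b * (1 + s * b) * Complex.exp (c * b) - Φ a * (1 + s * a) * Complex.exp (c * a)) / c
      - (1 / c) * (((deriv Φ b * (1 + s * b) + s * Φ b) * Complex.exp (c * b)
          - (deriv Φ a * (1 + s * a) + s * Φ a) * Complex.exp (c * a)) / c)
      + (1 / c) ^ 2 * ∫ x in a..b,
          (deriv (deriv Φ) x * (1 + s * x) + 2 * s * deriv Φ x) * Complex.exp (c * x) := by
  have hΦd : Differentiable ℝ Φ := hΦ.differentiable (by norm_num)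
  have hΦ1 : ContDiff ℝ 1 (deriv Φ) := by
    have : (2 : WithTop ℕ∞) = 1 + 1 := rfl
    rw [this, contDiff_succ_iff_deriv] at hΦ
    exact hΦ.2.2
  have hdΦd : Differentiable ℝ (deriv Φ) := hΦ1.differentiable one_ne_zero
  have hd2cont : Continuous (deriv (deriv Φ)) := by
    rw [contDiff_one_iff_deriv] at hΦ1
    exact hΦ1.2
  have hlin : ∀ x : ℝ, HasDerivAt (fun y : ℝ => 1 + s * (y : ℂ)) s x := by
    intro x
    simpa using (((hasDerivAt_id x).ofReal_comp (z := x)).const_mul s).const_add 1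
  have hu : ∀ x : ℝ, HasDerivAt (fun y : ℝ => Φ y * (1 + s * y))
      (deriv Φ x * (1 + s * x) + s * Φ x) x := by
    intro x
    have := ((hΦd x).hasDerivAt).fun_mul (hlin x)
    exact this.congr_deriv (by ring)
  have hu2 : ∀ x : ℝ, HasDerivAt (fun y : ℝ => deriv Φ y * (1 + s * y) + s * Φ y)
      (deriv (deriv Φ) x * (1 + s * x) + 2 * s * deriv Φ x) x := by
    intro x
    have h1 := ((hdΦd x).hasDerivAt).fun_mul (hlin x)
    have h2 := ((hΦd x).hasDerivAt).const_mul s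
    have := h1.fun_add h2
    exact this.congr_deriv (by ring)
  have hu'cont : Continuous fun x : ℝ => deriv Φ x * (1 + s * x) + s * Φ x := by
    have h1 : Continuous (deriv Φ) := hΦ1.continuous
    fun_prop
  have hu''cont : Continuous fun x : ℝ =>
      deriv (deriv Φ) x * (1 + s * x) + 2 * s * deriv Φ x := by
    have h1 : Continuous (deriv Φ) := hΦ1.continuous
    fun_prop
  rw [my_ibp c hc a b _ _ hu hu'cont, my_ibp c hc a b _ _ hu2 hu''cont]
  ring

lemma my_bound2 (Φ : ℝ → ℂ) (M M₁ M₂ : ℝ) (hΦ : ContDiff ℝ 2 Φ)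
    (hM : ∀ l : ℝ, ‖Φ l‖ ≤ M) (hM₁ : ∀ l : ℝ, ‖deriv Φ l‖ ≤ M₁)
    (hM₂ : ∀ l : ℝ, ‖deriv (deriv Φ) l‖ ≤ M₂) (t : ℝ) (ht : t ≠ 0) :
    ‖∫ l in (-1 : ℝ)..1, Φ l * ((1 - |l| : ℝ) : ℂ) * Complex.exp (Complex.I * l * t)‖
      ≤ (4 * M + 4 * M₁ + M₂) / t ^ 2 := by
  have hΦd : Differentiable ℝ Φ := hΦ.differentiable (by norm_num)
  have hΦ1 : ContDiff ℝ 1 (deriv Φ) := by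
    have h2 : (2 : WithTop ℕ∞) = 1 + 1 := rfl
    rw [h2, contDiff_succ_iff_deriv] at hΦ
    exact hΦ.2.2
  have hdΦc : Continuous (deriv Φ) := hΦ1.continuous
  have hd2c : Continuous (deriv (deriv Φ)) := by
    rw [contDiff_one_iff_deriv] at hΦ1; exact hΦ1.2
  set c : ℂ := Complex.I * t with hcdef
  have hc : c ≠ 0 := mul_ne_zero Complex.I_ne_zero (by exact_mod_cast ht)
  set f : ℝ → ℂ := fun l => Φ l * ((1 - |l| : ℝ) : ℂ) * Complex.exp (Complex.I * l * t) with hf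
  have hfc : Continuous f := by
    have := hΦ.continuous
    fun_prop
  have hfi1 : IntervalIntegrable f volume (-1) 0 := hfc.intervalIntegrable _ _
  have hfi2 : IntervalIntegrable f volume 0 1 := hfc.intervalIntegrable _ _
  have hcongr1 : ∫ l in (-1 : ℝ)..0, f l
      = ∫ l in (-1 : ℝ)..0, Φ l * (1 + 1 * l) * Complex.exp (c * l) := by
    apply integral_congr
    intro l hl
    rw [uIcc_of_le (by norm_num)] at hl
    have habs : |l| = -l := abs_of_nonpos hl.2
    have hexp : Complex.I * (l : ℂ) * (t : ℂ) = c * l := by rw [hcdef]; ring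
    simp only [hf, habs, hexp]
    push_cast
    ring_nf
  have hcongr2 : ∫ l in (0 : ℝ)..1, f l
      = ∫ l in (0 : ℝ)..1, Φ l * (1 + (-1) * l) * Complex.exp (c * l) := by
    apply integral_congr
    intro l hl
    rw [uIcc_of_le (by norm_num)] at hl
    have habs : |l| = l := abs_of_nonneg hl.1
    have hexp : Complex.I * (l : ℂ) * (t : ℂ) = c * l := by rw [hcdef]; ring
    simp only [hf, habs, hexp]
    push_cast
    ring_nf
  set Im : ℂ := ∫ x in (-1 : ℝ)..0,
      (deriv (deriv Φ) x * (1 + 1 * x) + 2 * 1 * deriv Φ x) * Complex.exp (c * x) with hIm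
  set Ip : ℂ := ∫ x in (0 : ℝ)..1,
      (deriv (deriv Φ) x * (1 + (-1) * x) + 2 * (-1) * deriv Φ x) * Complex.exp (c * x) with hIp
  have key : ∫ l in (-1 : ℝ)..1, f l = (1 / c) ^ 2 *
      (Φ 1 * Complex.exp c + Φ (-1) * Complex.exp (-c) - 2 * Φ 0 + Im + Ip) := by
    rw [← integral_add_adjacent_intervals hfi1 hfi2, hcongr1, hcongr2,
      my_piece Φ hΦ c hc 1, my_piece Φ hΦ c hc (-1), hIm, hIp]
    simp only [Complex.ofReal_zero, Complex.ofReal_one, Complex.ofReal_neg, mul_zero, mul_one,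
      mul_neg, neg_neg, zero_add, add_zero, Complex.exp_zero, one_mul, neg_mul]
    field_simp
    ring
  rw [show (∫ l in (-1 : ℝ)..1, Φ l * ((1 - |l| : ℝ) : ℂ) * Complex.exp (Complex.I * l * t))
      = ∫ l in (-1 : ℝ)..1, f l from rfl, key]
  have hnormc : ‖c‖ = |t| := by
    rw [hcdef, norm_mul, Complex.norm_I, one_mul, Complex.norm_real, Real.norm_eq_abs]
  have hexpc : ‖Complex.exp c‖ = 1 := by
    rw [hcdef]; simp [Complex.norm_exp]
  have hexpc' : ‖Complex.exp (-c)‖ = 1 := by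
    rw [hcdef]; simp [Complex.norm_exp]
  have hIm_bound : ‖Im‖ ≤ M₂ / 2 + 2 * M₁ := by
    have hb : ∀ᵐ x ∂(volume.restrict (uIoc (-1 : ℝ) 0)),
        ‖(deriv (deriv Φ) x * (1 + 1 * x) + 2 * 1 * deriv Φ x) * Complex.exp (c * x)‖
          ≤ (M₂ + 2 * M₁) + M₂ * x := by
      filter_upwards [ae_restrict_mem measurableSet_uIoc] with x hx
      rw [uIoc_of_le (by norm_num)] at hx
      have hx1 : (0 : ℝ) ≤ 1 + x := by linarith [hx.1]
      have hexpx : ‖Complex.exp (c * x)‖ = 1 := by rw [hcdef]; simp [Complex.norm_exp]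
      rw [norm_mul, hexpx, mul_one]
      calc ‖deriv (deriv Φ) x * (1 + 1 * x) + 2 * 1 * deriv Φ x‖
          ≤ ‖deriv (deriv Φ) x * (1 + 1 * (x : ℂ))‖ + ‖2 * 1 * deriv Φ x‖ := norm_add_le _ _
        _ ≤ M₂ * (1 + x) + 2 * M₁ := by
            rw [norm_mul, norm_mul, norm_mul]
            have h1 : ‖(1 : ℂ) + 1 * (x : ℂ)‖ = 1 + x := by
              rw [show (1 : ℂ) + 1 * (x : ℂ) = ((1 + x : ℝ) : ℂ) by push_cast; ring,
                Complex.norm_real, Real.norm_eq_abs, abs_of_nonneg hx1]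
            rw [h1]
            have := hM₂ x
            have := hM₁ x
            have h2 : ‖(2 : ℂ)‖ = 2 := by norm_num
            have h3 : ‖(1 : ℂ)‖ = 1 := by norm_num
            rw [h2, h3]
            nlinarith [norm_nonneg (deriv (deriv Φ) x), norm_nonneg (deriv Φ x)]
        _ = (M₂ + 2 * M₁) + M₂ * x := by ring
    have hgint : IntervalIntegrable (fun x : ℝ => (M₂ + 2 * M₁) + M₂ * x) volume (-1) 0 :=
      (continuous_const.add (continuous_const.mul continuous_id')).intervalIntegrable _ _
    have := intervalIntegral.norm_integral_le_abs_of_norm_le hb hgint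
    rw [my_linint (M₂ + 2 * M₁) M₂ (-1) 0] at this
    rw [hIm]
    refine le_trans this ?_
    have hm1 : 0 ≤ M₁ := le_trans (norm_nonneg _) (hM₁ 0)
    have hm2 : 0 ≤ M₂ := le_trans (norm_nonneg _) (hM₂ 0)
    have habs : (0:ℝ) ≤ (M₂ + 2 * M₁) * (0 - -1) + M₂ * ((0 ^ 2 - (-1) ^ 2) / 2) := by nlinarith
    rw [abs_of_nonneg habs]
    nlinarith
  have hIp_bound : ‖Ip‖ ≤ M₂ / 2 + 2 * M₁ := by
    have hb : ∀ᵐ x ∂(volume.restrict (uIoc (0 : ℝ) 1)),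
        ‖(deriv (deriv Φ) x * (1 + (-1) * x) + 2 * (-1) * deriv Φ x) * Complex.exp (c * x)‖
          ≤ (M₂ + 2 * M₁) + (-M₂) * x := by
      filter_upwards [ae_restrict_mem measurableSet_uIoc] with x hx
      rw [uIoc_of_le (by norm_num)] at hx
      have hx1 : (0 : ℝ) ≤ 1 - x := by linarith [hx.2]
      have hexpx : ‖Complex.exp (c * x)‖ = 1 := by rw [hcdef]; simp [Complex.norm_exp]
      rw [norm_mul, hexpx, mul_one]
      calc ‖deriv (deriv Φ) x * (1 + (-1) * x) + 2 * (-1) * deriv Φ x‖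
          ≤ ‖deriv (deriv Φ) x * (1 + (-1) * (x : ℂ))‖ + ‖2 * (-1) * deriv Φ x‖ := norm_add_le _ _
        _ ≤ M₂ * (1 - x) + 2 * M₁ := by
            rw [norm_mul, norm_mul, norm_mul]
            have h1 : ‖(1 : ℂ) + (-1) * (x : ℂ)‖ = 1 - x := by
              rw [show (1 : ℂ) + (-1) * (x : ℂ) = ((1 - x : ℝ) : ℂ) by push_cast; ring,
                Complex.norm_real, Real.norm_eq_abs, abs_of_nonneg hx1]
            rw [h1]
            have := hM₂ x
            have := hM₁ x
            have h2 : ‖(2 : ℂ)‖ = 2 := by norm_num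
            have h3 : ‖(-1 : ℂ)‖ = 1 := by norm_num
            rw [h2, h3]
            nlinarith [norm_nonneg (deriv (deriv Φ) x), norm_nonneg (deriv Φ x)]
        _ = (M₂ + 2 * M₁) + (-M₂) * x := by ring
    have hgint : IntervalIntegrable (fun x : ℝ => (M₂ + 2 * M₁) + (-M₂) * x) volume 0 1 :=
      (continuous_const.add (continuous_const.mul continuous_id')).intervalIntegrable _ _
    have := intervalIntegral.norm_integral_le_abs_of_norm_le hb hgint
    rw [my_linint (M₂ + 2 * M₁) (-M₂) 0 1] at this
    rw [hIp]
    refine le_trans this ?_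
    have hm1 : 0 ≤ M₁ := le_trans (norm_nonneg _) (hM₁ 0)
    have hm2 : 0 ≤ M₂ := le_trans (norm_nonneg _) (hM₂ 0)
    have habs : (0:ℝ) ≤ (M₂ + 2 * M₁) * (1 - 0) + -M₂ * ((1 ^ 2 - 0 ^ 2) / 2) := by nlinarith
    rw [abs_of_nonneg habs]
    nlinarith
  have hB : ‖Φ 1 * Complex.exp c + Φ (-1) * Complex.exp (-c) - 2 * Φ 0 + Im + Ip‖
      ≤ 4 * M + 4 * M₁ + M₂ := by
    have h1 : ‖Φ 1 * Complex.exp c‖ ≤ M := by rw [norm_mul, hexpc, mul_one]; exact hM 1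
    have h2 : ‖Φ (-1) * Complex.exp (-c)‖ ≤ M := by rw [norm_mul, hexpc', mul_one]; exact hM (-1)
    have h3 : ‖(2 : ℂ) * Φ 0‖ ≤ 2 * M := by
      rw [norm_mul, show ‖(2 : ℂ)‖ = 2 by norm_num]
      nlinarith [hM 0]
    calc ‖Φ 1 * Complex.exp c + Φ (-1) * Complex.exp (-c) - 2 * Φ 0 + Im + Ip‖
        ≤ ‖Φ 1 * Complex.exp c + Φ (-1) * Complex.exp (-c) - 2 * Φ 0 + Im‖ + ‖Ip‖ :=
          norm_add_le _ _
      _ ≤ (‖Φ 1 * Complex.exp c + Φ (-1) * Complex.exp (-c) - 2 * Φ 0‖ + ‖Im‖) + ‖Ip‖ := by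
          gcongr; exact norm_add_le _ _
      _ ≤ ((‖Φ 1 * Complex.exp c + Φ (-1) * Complex.exp (-c)‖ + ‖(2 : ℂ) * Φ 0‖) + ‖Im‖) + ‖Ip‖ := by
          gcongr; exact norm_sub_le _ _
      _ ≤ (((‖Φ 1 * Complex.exp c‖ + ‖Φ (-1) * Complex.exp (-c)‖) + ‖(2 : ℂ) * Φ 0‖) + ‖Im‖) + ‖Ip‖ := by
          gcongr; exact norm_add_le _ _
      _ ≤ (((M + M) + 2 * M) + (M₂ / 2 + 2 * M₁)) + (M₂ / 2 + 2 * M₁) := by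
          gcongr
      _ = 4 * M + 4 * M₁ + M₂ := by ring
  have heq : ‖(1 / c) ^ 2 * (Φ 1 * Complex.exp c + Φ (-1) * Complex.exp (-c) - 2 * Φ 0 + Im + Ip)‖
      = ‖Φ 1 * Complex.exp c + Φ (-1) * Complex.exp (-c) - 2 * Φ 0 + Im + Ip‖ / t ^ 2 := by
    rw [norm_mul, norm_pow, norm_div, norm_one, hnormc, div_pow, one_pow, sq_abs]
    ring
  rw [heq]
  gcongr

lemma my_bound1 (Φ : ℝ → ℂ) (M : ℝ) (hΦc : Continuous Φ) (hM : ∀ l : ℝ, ‖Φ l‖ ≤ M) (t : ℝ) :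
    ‖∫ l in (-1 : ℝ)..1, Φ l * ((1 - |l| : ℝ) : ℂ) * Complex.exp (Complex.I * l * t)‖ ≤ M := by
  have hM0 : 0 ≤ M := le_trans (norm_nonneg _) (hM 0)
  have hgc : Continuous (fun l : ℝ => M * (1 - |l|)) :=
    continuous_const.mul (continuous_const.sub continuous_abs)
  have hg : IntervalIntegrable (fun l : ℝ => M * (1 - |l|)) volume (-1) 1 :=
    hgc.intervalIntegrable _ _
  have hb : ∀ᵐ l ∂(volume.restrict (uIoc (-1 : ℝ) 1)),
      ‖Φ l * ((1 - |l| : ℝ) : ℂ) * Complex.exp (Complex.I * l * t)‖ ≤ M * (1 - |l|) := by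
    filter_upwards [ae_restrict_mem measurableSet_uIoc] with l hl
    rw [uIoc_of_le (by norm_num : (-1 : ℝ) ≤ 1)] at hl
    have h1 : |l| ≤ 1 := by rw [abs_le]; exact ⟨le_of_lt hl.1, hl.2⟩
    have hexp : ‖Complex.exp (Complex.I * l * t)‖ = 1 := by simp [Complex.norm_exp]
    rw [norm_mul, norm_mul, hexp, mul_one, Complex.norm_real, Real.norm_eq_abs,
      abs_of_nonneg (by linarith : (0 : ℝ) ≤ 1 - |l|)]
    have := hM l
    nlinarith [abs_nonneg l, norm_nonneg (Φ l)]
  have H := intervalIntegral.norm_integral_le_abs_of_norm_le hb hg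
  have hsplit : (∫ l in (-1 : ℝ)..1, M * (1 - |l|)) = M := by
    have hg1 : IntervalIntegrable (fun l : ℝ => M * (1 - |l|)) volume (-1) 0 :=
      hgc.intervalIntegrable _ _
    have hg2 : IntervalIntegrable (fun l : ℝ => M * (1 - |l|)) volume 0 1 :=
      hgc.intervalIntegrable _ _
    rw [← integral_add_adjacent_intervals hg1 hg2]
    have e1 : (∫ l in (-1 : ℝ)..0, M * (1 - |l|)) = ∫ l in (-1 : ℝ)..0, (M + M * l) := by
      apply integral_congr
      intro l hl
      rw [uIcc_of_le (by norm_num)] at hl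
      show M * (1 - |l|) = M + M * l
      rw [abs_of_nonpos hl.2]; ring
    have e2 : (∫ l in (0 : ℝ)..1, M * (1 - |l|)) = ∫ l in (0 : ℝ)..1, (M + (-M) * l) := by
      apply integral_congr
      intro l hl
      rw [uIcc_of_le (by norm_num)] at hl
      show M * (1 - |l|) = M + (-M) * l
      rw [abs_of_nonneg hl.1]; ring
    rw [e1, e2, my_linint, my_linint]
    norm_num
    ring
  rw [hsplit, abs_of_nonneg hM0] at H
  exact H


open MeasureTheory in
/-- `Φ₀ ∈ L¹(ℝ)` with `‖Φ₀‖₁ ≤ (2/π)·‖Φ‖_∞^{1/2}·(4‖Φ‖_∞ + 4‖Φ′‖_∞ + ‖Φ″‖_∞)^{1/2}`. -/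
theorem stmt6 (Φ : ℝ → ℂ) (M M₁ M₂ : ℝ)
    (hΦ : ContDiff ℝ 2 Φ)
    (hM : ∀ l : ℝ, ‖Φ l‖ ≤ M)
    (hM₁ : ∀ l : ℝ, ‖deriv Φ l‖ ≤ M₁)
    (hM₂ : ∀ l : ℝ, ‖deriv (deriv Φ) l‖ ≤ M₂)
    (Φ₀ : ℝ → ℂ)
    (hΦ₀ : ∀ t : ℝ, Φ₀ t = (1 / (2 * Real.pi)) •
      ∫ l in (-1 : ℝ)..1, Φ l * ((1 - |l| : ℝ) : ℂ) * Complex.exp (Complex.I * l * t)) :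
    Integrable Φ₀ ∧
      (∫ t : ℝ, ‖Φ₀ t‖) ≤ (2 / Real.pi) * Real.sqrt M * Real.sqrt (4 * M + 4 * M₁ + M₂) := by
  have hM0 : 0 ≤ M := le_trans (norm_nonneg _) (hM 0)
  have hM10 : 0 ≤ M₁ := le_trans (norm_nonneg _) (hM₁ 0)
  have hM20 : 0 ≤ M₂ := le_trans (norm_nonneg _) (hM₂ 0)
  have hπ : 0 < Real.pi := Real.pi_pos
  have hΦc : Continuous Φ := hΦ.continuous
  have hΦ₀eq : Φ₀ = fun t : ℝ => (1 / (2 * Real.pi)) •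
      ∫ l in (-1 : ℝ)..1, Φ l * ((1 - |l| : ℝ) : ℂ) * Complex.exp (Complex.I * l * t) :=
    funext hΦ₀
  have hcont : Continuous Φ₀ := by
    rw [hΦ₀eq]
    apply Continuous.fun_const_smul
    have huncurry : Continuous (Function.uncurry fun (t l : ℝ) =>
        Φ l * ((1 - |l| : ℝ) : ℂ) * Complex.exp (Complex.I * l * t)) := by
      show Continuous fun p : ℝ × ℝ =>
        Φ p.2 * ((1 - |p.2| : ℝ) : ℂ) * Complex.exp (Complex.I * p.2 * p.1)
      fun_prop
    exact intervalIntegral.continuous_parametric_intervalIntegral_of_continuous'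
      (μ := volume) huncurry (-1) 1
  have hnorm : ∀ t : ℝ, ‖Φ₀ t‖ = (1 / (2 * Real.pi)) *
      ‖∫ l in (-1 : ℝ)..1, Φ l * ((1 - |l| : ℝ) : ℂ) * Complex.exp (Complex.I * l * t)‖ := by
    intro t
    rw [hΦ₀ t, norm_smul, Real.norm_eq_abs, abs_of_nonneg (by positivity)]
  have hb1 : ∀ t : ℝ, ‖Φ₀ t‖ ≤ (1 / (2 * Real.pi)) * M := by
    intro t
    rw [hnorm t]
    exact mul_le_mul_of_nonneg_left (my_bound1 Φ M hΦc hM t) (by positivity)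
  have hb2 : ∀ t : ℝ, t ≠ 0 → ‖Φ₀ t‖ ≤ (1 / (2 * Real.pi)) * ((4 * M + 4 * M₁ + M₂) / t ^ 2) := by
    intro t ht
    rw [hnorm t]
    exact mul_le_mul_of_nonneg_left (my_bound2 Φ M M₁ M₂ hΦ hM hM₁ hM₂ t ht) (by positivity)
  rcases eq_or_lt_of_le hM0 with h0 | hMpos
  · -- M = 0 : Φ ≡ 0
    have hz : ∀ l : ℝ, Φ l = 0 := by
      intro l
      have := hM l
      rw [← h0] at this
      exact norm_le_zero_iff.mp this
    have hz0 : Φ₀ = 0 := by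
      funext t
      rw [hΦ₀ t]
      simp [hz]
    rw [hz0]
    refine ⟨integrable_zero _ _ _, ?_⟩
    simp [← h0]
  · -- M > 0
    set C : ℝ := 4 * M + 4 * M₁ + M₂ with hC
    have hCpos : 0 < C := by positivity
    have hsM : Real.sqrt M ≠ 0 := ne_of_gt (Real.sqrt_pos.mpr hMpos)
    have hsC : Real.sqrt C ≠ 0 := ne_of_gt (Real.sqrt_pos.mpr hCpos)
    set α : ℝ := Real.sqrt C / Real.sqrt M with hα
    have hαpos : 0 < α := div_pos (Real.sqrt_pos.mpr hCpos) (Real.sqrt_pos.mpr hMpos)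
    set K : ℝ := (1 / (2 * Real.pi)) * C with hK
    have hKpos : 0 < K := by positivity
    have hrpow : ∀ x : ℝ, x ∈ Ioi α → x ^ (-2 : ℝ) = (x ^ 2)⁻¹ := by
      intro x hx
      have hx0 : 0 < x := lt_trans hαpos hx
      rw [show (-2 : ℝ) = -((2 : ℕ) : ℝ) by norm_num, Real.rpow_neg hx0.le, Real.rpow_natCast]
    have htail : ∀ x ∈ Ioi α, ‖Φ₀ x‖ ≤ K * x ^ (-2 : ℝ) := by
      intro x hx
      have hx0 : 0 < x := lt_trans hαpos hx
      rw [hrpow x hx]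
      have := hb2 x (ne_of_gt hx0)
      rw [hK]
      calc ‖Φ₀ x‖ ≤ (1 / (2 * Real.pi)) * (C / x ^ 2) := this
        _ = 1 / (2 * Real.pi) * C * (x ^ 2)⁻¹ := by ring
    have htail' : ∀ x ∈ Ioi α, ‖Φ₀ (-x)‖ ≤ K * x ^ (-2 : ℝ) := by
      intro x hx
      have hx0 : 0 < x := lt_trans hαpos hx
      rw [hrpow x hx]
      have := hb2 (-x) (by simpa using ne_of_gt hx0)
      rw [hK]
      calc ‖Φ₀ (-x)‖ ≤ (1 / (2 * Real.pi)) * (C / (-x) ^ 2) := this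
        _ = 1 / (2 * Real.pi) * C * (x ^ 2)⁻¹ := by ring
    have hgint : IntegrableOn (fun x : ℝ => K * x ^ (-2 : ℝ)) (Ioi α) :=
      (integrableOn_Ioi_rpow_of_lt (by norm_num) hαpos).const_mul K
    have hint_right : IntegrableOn Φ₀ (Ioi α) := by
      apply Integrable.mono' hgint hcont.aestronglyMeasurable.restrict
      filter_upwards [ae_restrict_mem measurableSet_Ioi] with x hx
      exact htail x hx
    have hint_negright : IntegrableOn (fun x => Φ₀ (-x)) (Ioi α) := by
      apply Integrable.mono' hgint ((hcont.comp continuous_neg).aestronglyMeasurable.restrict)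
      filter_upwards [ae_restrict_mem measurableSet_Ioi] with x hx
      exact htail' x hx
    have hint_left : IntegrableOn Φ₀ (Iic (-α)) := by
      have h1 : IntegrableOn (fun x => Φ₀ (-x)) (Ici α) :=
        (integrableOn_Ici_iff_integrableOn_Ioi).mpr hint_negright
      have := ((Measure.measurePreserving_neg (volume : Measure ℝ)).integrableOn_comp_preimage
        (Homeomorph.neg ℝ).measurableEmbedding (f := Φ₀) (s := Iic (-α)))
      rw [← this]
      simpa [Function.comp_def, neg_preimage, neg_Iic, neg_neg] using h1
    have hint_mid : IntegrableOn Φ₀ (Ioc (-α) α) :=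
      (hcont.continuousOn.integrableOn_compact isCompact_Icc).mono_set Ioc_subset_Icc_self
    have hint : Integrable Φ₀ := by
      rw [← integrableOn_univ]
      have hU : (Iic (-α) ∪ (Ioc (-α) α ∪ Ioi α)) = (univ : Set ℝ) := by
        rw [Ioc_union_Ioi_eq_Ioi (by linarith : -α ≤ α), Iic_union_Ioi]
      rw [← hU]
      exact hint_left.union (hint_mid.union hint_right)
    refine ⟨hint, ?_⟩
    have hnint : Integrable (fun t => ‖Φ₀ t‖) := hint.norm
    have split1 : (∫ t : ℝ, ‖Φ₀ t‖)
        = (∫ t in Iic (-α), ‖Φ₀ t‖) + ∫ t in Ioi (-α), ‖Φ₀ t‖ :=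
      (intervalIntegral.integral_Iic_add_Ioi hnint.integrableOn hnint.integrableOn).symm
    have split2 : (∫ t in Ioi (-α), ‖Φ₀ t‖)
        = (∫ t in Ioc (-α) α, ‖Φ₀ t‖) + ∫ t in Ioi α, ‖Φ₀ t‖ := by
      rw [← Ioc_union_Ioi_eq_Ioi (by linarith : -α ≤ α)]
      exact setIntegral_union (Ioc_disjoint_Ioi le_rfl) measurableSet_Ioi
        hnint.integrableOn hnint.integrableOn
    have hrpow_int : (∫ x in Ioi α, K * x ^ (-2 : ℝ)) = K / α := by
      rw [MeasureTheory.integral_const_mul, integral_Ioi_rpow_of_lt (by norm_num) hαpos]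
      rw [show (-2 : ℝ) + 1 = -1 by norm_num, Real.rpow_neg_one]
      field_simp
    have hmid : (∫ t in Ioc (-α) α, ‖Φ₀ t‖) ≤ (1 / (2 * Real.pi)) * M * (2 * α) := by
      have hconst : IntegrableOn (fun _ : ℝ => (1 / (2 * Real.pi)) * M) (Ioc (-α) α) :=
        integrableOn_const measure_Ioc_lt_top.ne
      calc (∫ t in Ioc (-α) α, ‖Φ₀ t‖)
          ≤ ∫ _t in Ioc (-α) α, (1 / (2 * Real.pi)) * M :=
            setIntegral_mono_on hnint.integrableOn hconst measurableSet_Ioc fun x _ => hb1 x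
        _ = (volume (Ioc (-α) α)).toReal * ((1 / (2 * Real.pi)) * M) := by
            rw [setIntegral_const]; rfl
        _ = (1 / (2 * Real.pi)) * M * (2 * α) := by
            rw [Real.volume_Ioc, ENNReal.toReal_ofReal (by linarith)]
            ring
    have hrt : (∫ t in Ioi α, ‖Φ₀ t‖) ≤ K / α := by
      rw [← hrpow_int]
      exact setIntegral_mono_on hnint.integrableOn hgint measurableSet_Ioi htail
    have hlt : (∫ t in Iic (-α), ‖Φ₀ t‖) ≤ K / α := by
      have heq : (∫ x in Ioi α, ‖Φ₀ (-x)‖) = ∫ t in Iic (-α), ‖Φ₀ t‖ :=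
        integral_comp_neg_Ioi α (fun t => ‖Φ₀ t‖)
      rw [← heq, ← hrpow_int]
      exact setIntegral_mono_on hint_negright.norm hgint measurableSet_Ioi htail'
    -- final computation
    have hCα : C / α = Real.sqrt C * Real.sqrt M := by
      rw [hα, div_div_eq_mul_div, div_eq_iff hsC]
      nth_rewrite 1 [← Real.mul_self_sqrt hCpos.le]
      ring
    have hMα : M * α = Real.sqrt M * Real.sqrt C := by
      rw [hα]
      field_simp
      nlinarith [Real.mul_self_sqrt hM0, Real.sqrt_nonneg C, Real.sqrt_nonneg M]
    have hfinal : K / α + ((1 / (2 * Real.pi)) * M * (2 * α) + K / α)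
        = (2 / Real.pi) * Real.sqrt M * Real.sqrt C := by
      have e1 : K / α = (1 / (2 * Real.pi)) * (Real.sqrt C * Real.sqrt M) := by
        rw [hK, mul_div_assoc, hCα]
      have e2 : (1 / (2 * Real.pi)) * M * (2 * α) = (1 / Real.pi) * (Real.sqrt M * Real.sqrt C) := by
        field_simp
        exact hMα
      rw [e1, e2]
      field_simp
      ring
    rw [split1, split2]
    calc (∫ t in Iic (-α), ‖Φ₀ t‖) + ((∫ t in Ioc (-α) α, ‖Φ₀ t‖) + ∫ t in Ioi α, ‖Φ₀ t‖)
        ≤ K / α + ((1 / (2 * Real.pi)) * M * (2 * α) + K / α) := by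
          gcongr
      _ = (2 / Real.pi) * Real.sqrt M * Real.sqrt C := hfinal
end

section
/- Let T be a C₀-semigroup on X, and let x, y : ℝ → X be continuous bounded functions with x(t) = T(t−s)x(s) − ∫_s^t T(t−τ)y(τ)dτ for all s ≤ t (i.e. 𝓛x = y in the mild sense). Then for every f ∈ L¹(ℝ), the convolutions f∗x and f∗y satisfy the same relation: (f∗x)(t) = T(t−s)(f∗x)(s) − ∫_s^t T(t−τ)(f∗y)(τ)dτ for all s ≤ t; that is, 𝓛(f∗x) = f∗(𝓛x). -/
open MeasureTheory Set

section aux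
variable {X : Type*} [NormedAddCommGroup X] [NormedSpace ℂ X] [CompleteSpace X]

lemma sg_bound (T : ℝ → X →L[ℂ] X)
    (hTcont : ∀ x : X, ContinuousOn (fun t => T t x) (Set.Ici (0 : ℝ))) (R : ℝ) :
    ∃ M : ℝ, 0 ≤ M ∧ ∀ r ∈ Set.Icc (0:ℝ) R, ‖T r‖ ≤ M := by
  obtain ⟨M, hM⟩ := banach_steinhaus (g := fun i : Set.Icc (0:ℝ) R => T i) (fun v => by
    obtain ⟨C, hC⟩ := isCompact_Icc.exists_bound_of_continuousOn
      ((hTcont v).mono Set.Icc_subset_Ici_self)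
    exact ⟨C, fun i => hC i i.2⟩)
  exact ⟨max M 0, le_max_right _ _, fun r hr => le_trans (hM ⟨r, hr⟩) (le_max_left _ _)⟩

lemma sg_joint_cont (T : ℝ → X →L[ℂ] X)
    (hTcont : ∀ x : X, ContinuousOn (fun t => T t x) (Set.Ici (0 : ℝ))) :
    Continuous fun p : ℝ × X => T (max p.1 0) p.2 := by
  have hSv : ∀ v : X, Continuous fun r : ℝ => T (max r 0) v := fun v =>
    (hTcont v).comp_continuous (continuous_id.max continuous_const) fun r => Set.mem_Ici.2 (le_max_right _ _)
  rw [continuous_iff_continuousAt]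
  rintro ⟨r₀, v₀⟩
  obtain ⟨M, hM0, hM⟩ := sg_bound T hTcont (|r₀| + 1)
  have hMb : ∀ r : ℝ, |r - r₀| < 1 → ‖T (max r 0)‖ ≤ M := by
    intro r hr
    rcases abs_sub_lt_iff.1 hr with ⟨h1, h2⟩
    refine hM _ ⟨le_max_right _ _, max_le ?_ (by positivity)⟩
    have := le_abs_self r₀
    linarith
  have key : (fun p : ℝ × X => T (max p.1 0) p.2) =
      fun p => T (max p.1 0) (p.2 - v₀) + T (max p.1 0) v₀ := by
    funext p; simp [map_sub]
  have hev : ∀ᶠ p : ℝ × X in nhds (r₀, v₀), |p.1 - r₀| < 1 := by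
    have hc : Continuous fun p : ℝ × X => |p.1 - r₀| :=
      (continuous_fst.sub continuous_const).abs
    have ht := hc.tendsto (r₀, v₀)
    simp only [sub_self, abs_zero] at ht
    exact ht (Iio_mem_nhds one_pos)
  have h1 : Filter.Tendsto (fun p : ℝ × X => T (max p.1 0) (p.2 - v₀))
      (nhds (r₀, v₀)) (nhds 0) := by
    refine squeeze_zero_norm' (a := fun p : ℝ × X => M * ‖p.2 - v₀‖) ?_ ?_
    · filter_upwards [hev] with p hp
      exact le_trans ((T (max p.1 0)).le_opNorm _)
        (mul_le_mul_of_nonneg_right (hMb _ hp) (norm_nonneg _))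
    · have hc : Continuous fun p : ℝ × X => M * ‖p.2 - v₀‖ :=
        continuous_const.mul ((continuous_snd.sub continuous_const).norm)
      have := hc.tendsto (r₀, v₀)
      simpa using this
  have h2 : Filter.Tendsto (fun p : ℝ × X => T (max p.1 0) v₀)
      (nhds (r₀, v₀)) (nhds (T (max r₀ 0) v₀)) :=
    ((hSv v₀).comp continuous_fst).tendsto (r₀, v₀)
  have h3 := h1.add h2
  rw [ContinuousAt, key]
  simpa using h3

end aux

open ContinuousLinearMap MeasureTheory in
/-- The mild parabolic operator commutes with convolution by `f ∈ L¹(ℝ)`: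
`𝓛(f∗x) = f∗(𝓛x)`. -/
theorem stmt11 {X : Type*} [NormedAddCommGroup X] [NormedSpace ℂ X] [CompleteSpace X]
    (T : ℝ → X →L[ℂ] X)
    (hT0 : T 0 = 1)
    (hTadd : ∀ s t : ℝ, 0 ≤ s → 0 ≤ t → T (s + t) = T s ∘L T t)
    (hTcont : ∀ x : X, ContinuousOn (fun t => T t x) (Set.Ici (0 : ℝ)))
    (f : ℝ → ℂ) (hf : Integrable f)
    (x y : ℝ → X)
    (hx : Continuous x) (hxb : ∃ C, ∀ t, ‖x t‖ ≤ C)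
    (hy : Continuous y) (hyb : ∃ C, ∀ t, ‖y t‖ ≤ C)
    (hxy : ∀ s t : ℝ, s ≤ t →
      x t = T (t - s) (x s) - ∫ τ in s..t, T (t - τ) (y τ)) :
    ∀ s t : ℝ, s ≤ t →
      (∫ τ : ℝ, f (t - τ) • x τ) =
        T (t - s) (∫ τ : ℝ, f (s - τ) • x τ) -
          ∫ τ in s..t, T (t - τ) (∫ σ : ℝ, f (τ - σ) • y σ) := by
  obtain ⟨Cx, hCx⟩ := hxb
  obtain ⟨Cy, hCy⟩ := hyb
  have hfm := hf.aestronglyMeasurable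
  set S : ℝ → X →L[ℂ] X := fun r => T (max r 0) with hS
  have hG : Continuous fun p : ℝ × X => S p.1 p.2 := sg_joint_cont T hTcont
  -- integrability of convolution integrands
  have hint : ∀ (g : ℝ → X) (C : ℝ), Continuous g → (∀ u, ‖g u‖ ≤ C) →
      ∀ r : ℝ, Integrable (fun σ => f σ • g (r - σ)) := by
    intro g C hg hgC r
    refine (hf.norm.mul_const C).mono'
      (hfm.smul (hg.comp (continuous_const.sub continuous_id)).aestronglyMeasurable) ?_
    filter_upwards with σ
    rw [norm_smul]
    exact mul_le_mul_of_nonneg_left (hgC _) (norm_nonneg _)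
  have hIx : ∀ r : ℝ, Integrable (fun σ => f σ • x (r - σ)) := hint x Cx hx hCx
  have hIy : ∀ r : ℝ, Integrable (fun σ => f σ • y (r - σ)) := hint y Cy hy hCy
  -- change of variables for convolutions
  have hconv : ∀ (g : ℝ → X) (r : ℝ),
      (∫ τ : ℝ, f (r - τ) • g τ) = ∫ σ : ℝ, f σ • g (r - σ) := by
    intro g r
    have h : ∫ σ : ℝ, f σ • g (r - σ) = ∫ τ : ℝ, f (r - τ) • g τ :=
      calc ∫ σ : ℝ, f σ • g (r - σ)
          = ∫ σ : ℝ, f (r - (r - σ)) • g (r - σ) := by simp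
        _ = ∫ σ : ℝ, f (r - (r + σ)) • g (r + σ) := by
            rw [← MeasureTheory.integral_neg_eq_self
              (fun σ => f (r - (r + σ)) • g (r + σ)) volume]
            simp [sub_eq_add_neg]
        _ = ∫ τ : ℝ, f (r - τ) • g τ :=
            MeasureTheory.integral_add_left_eq_self
              (fun τ => f (r - τ) • g τ) r
    exact h.symm
  intro s t hst
  have hts : (0:ℝ) ≤ t - s := sub_nonneg.2 hst
  obtain ⟨M, hM0, hM⟩ := sg_bound T hTcont (t - s)
  have hSn : ∀ τ ∈ Set.Ioc s t, ‖S (t - τ)‖ ≤ M := by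
    intro τ hτ
    exact hM _ ⟨le_max_right _ _, max_le (by linarith [hτ.1, hτ.2]) hts⟩
  -- rewrite RHS interval integrand using S and hconv
  have hRHS : (∫ τ in s..t, T (t - τ) (∫ σ : ℝ, f (τ - σ) • y σ)) =
      ∫ τ in s..t, S (t - τ) (∫ σ : ℝ, f σ • y (τ - σ)) := by
    apply intervalIntegral.integral_congr
    intro τ hτ
    rw [Set.uIcc_of_le hst] at hτ
    show T (t - τ) (∫ σ : ℝ, f (τ - σ) • y σ) = S (t - τ) (∫ σ : ℝ, f σ • y (τ - σ))
    rw [hconv y τ, hS]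
    simp only []
    rw [max_eq_left (by linarith [hτ.1, hτ.2])]
  rw [hconv x t, hconv x s, hRHS]
  have hTS : T (t - s) = S (t - s) := by rw [hS]; simp [max_eq_left hts]
  rw [hTS]
  -- pointwise identity from hxy
  have hA : ∀ σ : ℝ, f σ • x (t - σ) =
      S (t - s) (f σ • x (s - σ)) - ∫ τ in s..t, f σ • S (t - τ) (y (τ - σ)) := by
    intro σ
    have h1 := hxy (s - σ) (t - σ) (by linarith)
    have h2 : (∫ τ in s..t, T (t - τ) (y (τ - σ))) =
        ∫ ρ in (s - σ)..(t - σ), T ((t - σ) - ρ) (y ρ) := by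
      have h := intervalIntegral.integral_comp_sub_right
        (a := s) (b := t) (fun ρ => T ((t - σ) - ρ) (y ρ)) σ
      simp only [sub_sub_sub_cancel_right] at h
      exact h
    have h3 : x (t - σ) = T (t - s) (x (s - σ)) - ∫ τ in s..t, T (t - τ) (y (τ - σ)) := by
      rw [h2]
      have : t - σ - (s - σ) = t - s := by ring
      rw [← this]
      exact h1
    rw [h3, smul_sub, ← (T (t - s)).map_smul, ← intervalIntegral.integral_smul, hTS]
    congr 1
    apply intervalIntegral.integral_congr
    intro τ hτ
    rw [Set.uIcc_of_le hst] at hτ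
    show f σ • T (t - τ) (y (τ - σ)) = f σ • S (t - τ) (y (τ - σ))
    rw [hS]
    simp only []
    rw [max_eq_left (by linarith [hτ.1, hτ.2])]
  -- product integrability
  set ν : Measure ℝ := volume.restrict (Set.Ioc s t) with hν
  have hF : Integrable (Function.uncurry fun σ τ : ℝ => f σ • S (t - τ) (y (τ - σ)))
      (volume.prod ν) := by
    have haesm : AEStronglyMeasurable
        (Function.uncurry fun σ τ : ℝ => f σ • S (t - τ) (y (τ - σ))) (volume.prod ν) := by
      apply AEStronglyMeasurable.smul
      · exact hfm.comp_quasiMeasurePreserving (Measure.quasiMeasurePreserving_fst (μ := volume) (ν := ν))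
      · exact (hG.comp ((continuous_const.sub continuous_snd).prodMk
          (hy.comp (continuous_snd.sub continuous_fst)))).aestronglyMeasurable
    refine Integrable.mono' (g := fun p : ℝ × ℝ => ‖f p.1‖ * (M * Cy)) ?_ haesm ?_
    · exact hf.norm.mul_prod (integrable_const _)
    · have hmem : ∀ᵐ p : ℝ × ℝ ∂(volume.prod ν), p.2 ∈ Set.Ioc s t := by
        have hprod : volume.prod ν = (volume.prod volume).restrict
            ((Set.univ : Set ℝ) ×ˢ Set.Ioc s t) := by
          rw [hν, ← Measure.prod_restrict, Measure.restrict_univ]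
        rw [hprod]
        filter_upwards [ae_restrict_mem (MeasurableSet.univ.prod measurableSet_Ioc)] with p hp
        exact hp.2
      filter_upwards [hmem] with p hp
      rw [Function.uncurry, norm_smul]
      refine mul_le_mul_of_nonneg_left ?_ (norm_nonneg _)
      calc ‖S (t - p.2) (y (p.2 - p.1))‖ ≤ ‖S (t - p.2)‖ * ‖y (p.2 - p.1)‖ :=
            (S (t - p.2)).le_opNorm _
        _ ≤ M * Cy := mul_le_mul (hSn _ hp) (hCy _) (norm_nonneg _) hM0
  have hI1 : Integrable (fun σ => S (t - s) (f σ • x (s - σ))) :=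
    (S (t - s)).integrable_comp (hIx s)
  have hI2 : Integrable (fun σ => ∫ τ in s..t, f σ • S (t - τ) (y (τ - σ))) := by
    simp_rw [intervalIntegral.integral_of_le hst]
    exact hF.integral_prod_left
  calc ∫ σ : ℝ, f σ • x (t - σ)
      = ∫ σ : ℝ, (S (t - s) (f σ • x (s - σ)) -
          ∫ τ in s..t, f σ • S (t - τ) (y (τ - σ))) := by
        exact integral_congr_ae (Filter.Eventually.of_forall hA)
    _ = (∫ σ : ℝ, S (t - s) (f σ • x (s - σ))) -
          ∫ σ : ℝ, ∫ τ in s..t, f σ • S (t - τ) (y (τ - σ)) := integral_sub hI1 hI2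
    _ = S (t - s) (∫ σ : ℝ, f σ • x (s - σ)) -
          ∫ τ in s..t, S (t - τ) (∫ σ : ℝ, f σ • y (τ - σ)) := by
        congr 1
        · exact ContinuousLinearMap.integral_comp_comm _ (hIx s)
        · simp_rw [intervalIntegral.integral_of_le hst]
          rw [MeasureTheory.integral_integral_swap hF]
          apply integral_congr_ae
          filter_upwards with τ
          calc ∫ σ : ℝ, f σ • S (t - τ) (y (τ - σ))
              = ∫ σ : ℝ, S (t - τ) (f σ • y (τ - σ)) := by
                apply integral_congr_ae
                filter_upwards with σ
                rw [(S (t - τ)).map_smul]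
            _ = S (t - τ) (∫ σ : ℝ, f σ • y (τ - σ)) :=
                ContinuousLinearMap.integral_comp_comm _ (hIy τ)
end

section
/- Let T be a C₀-semigroup on X whose growth bound is negative, i.e. there exist M ≥ 1 and ε > 0 with ‖T(t)‖ ≤ M e^{−εt} for all t ≥ 0. Then for every bounded continuous y : ℝ → X, the function x(t) = −∫_{−∞}^t T(t−τ)y(τ)dτ is the unique bounded continuous mild solution of 𝓛x = y, i.e. x(t) = T(t−s)x(s) − ∫_s^t T(t−τ)y(τ)dτ for all s ≤ t, and ‖x‖_∞ ≤ (M/ε)‖y‖_∞. -/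
open MeasureTheory Real Set Filter

open ContinuousLinearMap in
/-- If the semigroup `T` is exponentially stable, then for each bounded continuous `y`,
`x(t) = −∫_{−∞}^t T(t−τ)y(τ)dτ` is the unique bounded continuous mild solution of
`𝓛x = y`, and `‖x‖_∞ ≤ (M/ε)‖y‖_∞`. -/
theorem stmt14 {X : Type*} [NormedAddCommGroup X] [NormedSpace ℂ X] [CompleteSpace X]
    (T : ℝ → X →L[ℂ] X)
    (hT0 : T 0 = 1)
    (hTadd : ∀ s t : ℝ, 0 ≤ s → 0 ≤ t → T (s + t) = T s ∘L T t)
    (hTcont : ∀ x : X, ContinuousOn (fun t => T t x) (Set.Ici (0 : ℝ)))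
    (M ε : ℝ) (hM : 1 ≤ M) (hε : 0 < ε)
    (hdecay : ∀ t : ℝ, 0 ≤ t → ‖T t‖ ≤ M * Real.exp (-ε * t))
    (y : ℝ → X) (hy : Continuous y) (Cy : ℝ) (hyb : ∀ t, ‖y t‖ ≤ Cy)
    (x : ℝ → X) (hx : ∀ t : ℝ, x t = -∫ τ in Set.Iic t, T (t - τ) (y τ)) :
    Continuous x ∧
    (∀ s t : ℝ, s ≤ t → x t = T (t - s) (x s) - ∫ τ in s..t, T (t - τ) (y τ)) ∧
    (∀ t : ℝ, ‖x t‖ ≤ (M / ε) * Cy) ∧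
    (∀ x' : ℝ → X, Continuous x' → (∃ C, ∀ t, ‖x' t‖ ≤ C) →
      (∀ s t : ℝ, s ≤ t → x' t = T (t - s) (x' s) - ∫ τ in s..t, T (t - τ) (y τ)) →
      x' = x) := by
  have hCy0 : 0 ≤ Cy := le_trans (norm_nonneg _) (hyb 0)
  have hM0 : 0 < M := lt_of_lt_of_le one_pos hM
  have hTb : ∀ s : ℝ, 0 ≤ s → ‖T s‖ ≤ M := by
    intro s hs
    refine (hdecay s hs).trans ?_
    have h1 : Real.exp (-ε * s) ≤ 1 := Real.exp_le_one_iff.mpr (by nlinarith)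
    nlinarith
  -- joint continuity
  have hjoint : ∀ (g h : ℝ → ℝ) (S : Set ℝ), Continuous g → Continuous h →
      (∀ τ ∈ S, 0 ≤ g τ) → ContinuousOn (fun τ => T (g τ) (y (h τ))) S := by
    intro g h S hg hh hg0 τ₀ hτ₀
    have hgt : Tendsto g (nhdsWithin τ₀ S) (nhdsWithin (g τ₀) (Ici 0)) :=
      (hg.continuousWithinAt).tendsto_nhdsWithin (fun τ hτ => hg0 τ hτ)
    have h1 : Tendsto (fun τ => T (g τ) (y (h τ₀))) (nhdsWithin τ₀ S)
        (nhds (T (g τ₀) (y (h τ₀)))) :=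
      ((hTcont (y (h τ₀)) (g τ₀) (hg0 τ₀ hτ₀)).tendsto).comp hgt
    have h2 : Tendsto (fun τ => T (g τ) (y (h τ) - y (h τ₀))) (nhdsWithin τ₀ S) (nhds 0) := by
      have hb : ∀ᶠ τ in nhdsWithin τ₀ S,
          ‖T (g τ) (y (h τ) - y (h τ₀))‖ ≤ M * ‖y (h τ) - y (h τ₀)‖ := by
        filter_upwards [self_mem_nhdsWithin] with τ hτ
        calc ‖T (g τ) (y (h τ) - y (h τ₀))‖
            ≤ ‖T (g τ)‖ * ‖y (h τ) - y (h τ₀)‖ := (T (g τ)).le_opNorm _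
          _ ≤ M * ‖y (h τ) - y (h τ₀)‖ :=
              mul_le_mul_of_nonneg_right (hTb _ (hg0 τ hτ)) (norm_nonneg _)
      have hlim : Tendsto (fun τ => M * ‖y (h τ) - y (h τ₀)‖) (nhdsWithin τ₀ S) (nhds 0) := by
        have hc : Continuous fun τ => M * ‖y (h τ) - y (h τ₀)‖ :=
          continuous_const.mul ((hy.comp hh).sub continuous_const).norm
        have := (hc.continuousWithinAt (s := S) (x := τ₀)).tendsto
        simpa using this
      exact squeeze_zero_norm' hb hlim
    have h3 := h1.add h2
    rw [add_zero] at h3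
    have heq : ∀ τ, T (g τ) (y (h τ₀)) + T (g τ) (y (h τ) - y (h τ₀)) = T (g τ) (y (h τ)) := by
      intro τ; rw [map_sub]; abel
    exact Tendsto.congr heq h3
  -- substitution lemma
  have hemb : ∀ t : ℝ, MeasurableEmbedding (fun u : ℝ => t - u) := fun t =>
    (Homeomorph.subLeft t).measurableEmbedding
  have hpre : ∀ t : ℝ, (fun u : ℝ => t - u) ⁻¹' (Iic t) = Ici 0 := by
    intro t; ext u; simp
  have hsub : ∀ (t : ℝ) (f : ℝ → X),
      (∫ τ in Iic t, f τ) = ∫ u in Ioi (0:ℝ), f (t - u) := by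
    intro t f
    have h1 := (Measure.measurePreserving_sub_left volume t).setIntegral_preimage_emb
      (hemb t) f (Iic t)
    rw [hpre t] at h1
    rw [← h1, integral_Ici_eq_integral_Ioi]
  -- integrability on Ioi 0
  have hbInt : Integrable (fun u => M * Cy * Real.exp (-ε * u))
      (volume.restrict (Ioi (0:ℝ))) :=
    (exp_neg_integrableOn_Ioi 0 hε).const_mul (M * Cy)
  have hcontIoi : ∀ t : ℝ, ContinuousOn (fun u => T u (y (t - u))) (Ici 0) := fun t =>
    hjoint id (fun u => t - u) (Ici 0) continuous_id (by continuity) (fun τ hτ => hτ)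
  have hnormb : ∀ (t u : ℝ), 0 ≤ u → ‖T u (y (t - u))‖ ≤ M * Cy * Real.exp (-ε * u) := by
    intro t u hu
    calc ‖T u (y (t - u))‖ ≤ ‖T u‖ * ‖y (t - u)‖ := (T u).le_opNorm _
      _ ≤ (M * Real.exp (-ε * u)) * Cy := by
          apply mul_le_mul (hdecay u hu) (hyb _) (norm_nonneg _) (by positivity)
      _ = M * Cy * Real.exp (-ε * u) := by ring
  have hintIoi : ∀ t : ℝ, IntegrableOn (fun u => T u (y (t - u))) (Ioi 0) := by
    intro t
    refine Integrable.mono' hbInt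
      (((hcontIoi t).mono Ioi_subset_Ici_self).aestronglyMeasurable measurableSet_Ioi) ?_
    filter_upwards [ae_restrict_mem measurableSet_Ioi] with u hu
    exact hnormb t u (le_of_lt hu)
  -- integrability on Iic t
  have hint_Iic : ∀ t : ℝ, IntegrableOn (fun τ => T (t - τ) (y τ)) (Iic t) := by
    intro t
    have h1 : Integrable ((fun τ => T (t - τ) (y τ)) ∘ (fun u : ℝ => t - u))
        (volume.restrict ((fun u : ℝ => t - u) ⁻¹' (Iic t))) := by
      rw [hpre t]
      have : IntegrableOn (fun u : ℝ => T u (y (t - u))) (Ici 0) :=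
        (integrableOn_Ici_iff_integrableOn_Ioi (hb := enorm_ne_top)).mpr (hintIoi t)
      refine this.congr_fun ?_ measurableSet_Ici
      intro u _; simp [Function.comp, sub_sub_cancel]
    exact (((Measure.measurePreserving_sub_left volume t).restrict_preimage_emb (hemb t)
      (Iic t)).integrable_comp_emb (hemb t)).mp h1
  -- mild solution property
  have hmild : ∀ s t : ℝ, s ≤ t → x t = T (t - s) (x s) - ∫ τ in s..t, T (t - τ) (y τ) := by
    intro s t hst
    have hsplit : (∫ τ in Iic t, T (t - τ) (y τ)) =
        (∫ τ in Iic s, T (t - τ) (y τ)) + ∫ τ in Ioc s t, T (t - τ) (y τ) := by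
      rw [← setIntegral_union ((Iic_disjoint_Ioi (le_refl s)).mono_right Ioc_subset_Ioi_self)
        measurableSet_Ioc ((hint_Iic t).mono_set (Iic_subset_Iic.mpr hst))
        ((hint_Iic t).mono_set Ioc_subset_Iic_self), Iic_union_Ioc_eq_Iic hst]
    have hTx : T (t - s) (x s) = -∫ τ in Iic s, T (t - τ) (y τ) := by
      rw [hx s, map_neg]
      congr 1
      rw [← ContinuousLinearMap.integral_comp_comm (T (t - s)) (hint_Iic s)]
      refine setIntegral_congr_fun measurableSet_Iic (fun τ hτ => ?_)
      have h1 := hTadd (t - s) (s - τ) (by linarith) (by simp only [mem_Iic] at hτ; linarith)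
      have h2 : t - s + (s - τ) = t - τ := by ring
      rw [h2] at h1
      rw [h1]; rfl
    rw [hx t, hsplit, hTx, intervalIntegral.integral_of_le hst]
    abel
  -- the exponential integral
  have hval : (∫ u in Ioi (0:ℝ), Real.exp (-ε * u)) = ε⁻¹ := by
    have h := integral_comp_mul_left_Ioi (fun z => Real.exp (-z)) 0 hε
    simp only [mul_zero, integral_exp_neg_Ioi_zero, smul_eq_mul, mul_one, neg_mul] at h ⊢
    exact h
  -- the bound
  have hbound : ∀ t : ℝ, ‖x t‖ ≤ (M / ε) * Cy := by
    intro t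
    rw [hx t, hsub t, norm_neg]
    simp only [sub_sub_cancel]
    have h1 : ‖∫ u in Ioi (0:ℝ), T u (y (t - u))‖
        ≤ ∫ u in Ioi (0:ℝ), M * Cy * Real.exp (-ε * u) := by
      refine norm_integral_le_of_norm_le hbInt ?_
      filter_upwards [ae_restrict_mem measurableSet_Ioi] with u hu
      exact hnormb t u (le_of_lt hu)
    have h2 : (∫ u in Ioi (0:ℝ), M * Cy * Real.exp (-ε * u)) = (M / ε) * Cy := by
      rw [integral_const_mul, hval]
      field_simp
    rw [h2] at h1
    exact h1
  -- continuity
  have hcont : Continuous x := by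
    have hc : Continuous fun t => ∫ u in Ioi (0:ℝ), T u (y (t - u)) := by
      apply continuous_of_dominated (bound := fun u => M * Cy * Real.exp (-ε * u))
      · intro t
        exact (((hcontIoi t).mono Ioi_subset_Ici_self).aestronglyMeasurable measurableSet_Ioi)
      · intro t
        filter_upwards [ae_restrict_mem measurableSet_Ioi] with u hu
        exact hnormb t u (le_of_lt hu)
      · exact hbInt
      · filter_upwards [] with u
        exact (T u).continuous.comp (hy.comp (continuous_id.sub continuous_const))
    refine (hc.neg).congr (fun t => ?_)
    rw [hx t, hsub t]
    simp only [sub_sub_cancel]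
    rfl
  refine ⟨hcont, hmild, hbound, ?_⟩
  -- uniqueness
  intro x' hx'c hCex hx'm
  obtain ⟨C, hC⟩ := hCex
  funext t
  have hd : ∀ s, s ≤ t → x' t - x t = T (t - s) (x' s - x s) := by
    intro s hst
    rw [hx'm s t hst, hmild s t hst, map_sub]
    abel
  have hDn : ∀ s, ‖x' s - x s‖ ≤ C + (M / ε) * Cy := fun s =>
    (norm_sub_le _ _).trans (add_le_add (hC s) (hbound s))
  have hseq : ∀ n : ℕ, ‖x' t - x t‖ ≤ M * Real.exp (-ε * n) * (C + (M / ε) * Cy) := by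
    intro n
    have h1 := hd (t - n) (by linarith [Nat.cast_nonneg (α := ℝ) n])
    have h2 : t - (t - (n:ℝ)) = n := by ring
    rw [h2] at h1
    rw [h1]
    calc ‖T (n:ℝ) (x' (t - n) - x (t - n))‖
        ≤ ‖T (n:ℝ)‖ * ‖x' (t - n) - x (t - n)‖ := (T (n:ℝ)).le_opNorm _
      _ ≤ (M * Real.exp (-ε * n)) * (C + (M / ε) * Cy) :=
          mul_le_mul (hdecay n (Nat.cast_nonneg n)) (hDn _) (norm_nonneg _) (by positivity)
  have hlim : Tendsto (fun n : ℕ => M * Real.exp (-ε * n) * (C + (M / ε) * Cy))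
      atTop (nhds 0) := by
    have h1 : Tendsto (fun n : ℕ => ε * (n:ℝ)) atTop atTop :=
      (tendsto_natCast_atTop_atTop).const_mul_atTop hε
    have h2 : Tendsto (fun n : ℕ => -ε * (n:ℝ)) atTop atBot := by
      simp only [neg_mul]
      exact tendsto_neg_atTop_atBot.comp h1
    have h3 : Tendsto (fun n : ℕ => Real.exp (-ε * (n:ℝ))) atTop (nhds 0) :=
      Real.tendsto_exp_atBot.comp h2
    have h4 := (h3.const_mul M).mul_const (C + (M / ε) * Cy)
    simpa using h4
  have hle : ‖x' t - x t‖ ≤ 0 := ge_of_tendsto' hlim hseq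
  have : x' t - x t = 0 := norm_le_zero_iff.mp hle
  exact sub_eq_zero.mp this
end
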